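/- Let W be a path-shaped polyomino with k tiles that is constructible. Then W contains a subpath Q (a set of consecutive tiles along W) with at least ⌈k/2⌉ tiles that is sequentially constructible, i.e., constructible by adding its tiles in order along the path starting from one of Q's endpoints. -/

import Mathlib

/-- Grid points. -/
abbrev Pt := ℤ × ℤ

/-- Two grid points are adjacent if they are at L1-distance 1. -/
def GridAdj (p q : Pt) : Prop := |p.1 - q.1| + |p.2 - q.2| = 1

/-- A set of grid points is connected in the grid graph. -/
def ConnectedIn (Q : Set Pt) : Prop :=
  ∀ p ∈ Q, ∀ q ∈ Q, Relation.ReflTransGen (fun a b => b ∈ Q ∧ GridAdj a b) p q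

/-- A polyomino: a finite nonempty set of grid points whose grid graph is connected. -/
def IsPolyomino (P : Finset Pt) : Prop := P.Nonempty ∧ ConnectedIn ↑P

/-- Northern blocking set of `p` with respect to `Q`. -/
def Nblk (p : Pt) (Q : Set Pt) : Set Pt := {q ∈ Q | p.2 < q.2 ∧ |q.1 - p.1| ≤ 1}
/-- Southern blocking set. -/
def Sblk (p : Pt) (Q : Set Pt) : Set Pt := {q ∈ Q | q.2 < p.2 ∧ |q.1 - p.1| ≤ 1}
/-- Eastern blocking set. -/
def Eblk (p : Pt) (Q : Set Pt) : Set Pt := {q ∈ Q | p.1 < q.1 ∧ |q.2 - p.2| ≤ 1}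
/-- Western blocking set. -/
def Wblk (p : Pt) (Q : Set Pt) : Set Pt := {q ∈ Q | q.1 < p.1 ∧ |q.2 - p.2| ≤ 1}

/-- At least one of the four blocking sets of `p` w.r.t. `Q` is empty. -/
def FreeDir (p : Pt) (Q : Set Pt) : Prop :=
  Nblk p Q = ∅ ∨ Sblk p Q = ∅ ∨ Eblk p Q = ∅ ∨ Wblk p Q = ∅

/-- A position `p ∉ Q` can be added to `Q`. -/
def CanAdd (p : Pt) (Q : Set Pt) : Prop :=
  p ∉ Q ∧ (∃ q ∈ Q, GridAdj p q) ∧ FreeDir p Q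

/-- A list of tiles is a valid construction order. -/
def ConstructibleOrder (l : List Pt) : Prop :=
  ∀ (i : ℕ) (h : i < l.length), 1 ≤ i → CanAdd (l.get ⟨i, h⟩) {x | x ∈ l.take i}

/-- A finite set of tiles is constructible. -/
def Constructible (P : Finset Pt) : Prop :=
  ∃ l : List Pt, l.Nodup ∧ l.toFinset = P ∧ ConstructibleOrder l

/-- A tile `t ∈ Q` is removable from `Q`. -/
def Removable (t : Pt) (Q : Set Pt) : Prop :=
  t ∈ Q ∧ (Q \ {t} = ∅ ∨ ConnectedIn (Q \ {t})) ∧ FreeDir t (Q \ {t})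

/-- A list of tiles is a valid decomposition order. -/
def DecompOrder (l : List Pt) : Prop :=
  ∀ (i : ℕ) (h : i < l.length), Removable (l.get ⟨i, h⟩) {x | x ∈ l.drop i}

/-- A finite set of tiles is decomposable. -/
def Decomposable (P : Finset Pt) : Prop :=
  ∃ l : List Pt, l.Nodup ∧ l.toFinset = P ∧ DecompOrder l

/-- A polyomino is simple (hole-free) if the complement grid graph is connected. -/
def SimplePoly (P : Finset Pt) : Prop := ConnectedIn {p : Pt | p ∉ P}

/-- The 2×2 square of grid points with lower-left corner `a`. -/
def Square (a : Pt) : Set Pt := {a, (a.1 + 1, a.2), (a.1, a.2 + 1), (a.1 + 1, a.2 + 1)}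

/-- A tile `t ∈ P` is convex if some 2×2 square contains `t` and no other point of `P`. -/
def ConvexTile (t : Pt) (P : Finset Pt) : Prop :=
  t ∈ P ∧ ∃ a : Pt, t ∈ Square a ∧ ∀ q ∈ P, q ∈ Square a → q = t

/-- A tile `t ∈ P` is a cut tile if `P \ {t}` is nonempty and disconnected. -/
def CutTile (t : Pt) (P : Finset Pt) : Prop :=
  t ∈ P ∧ (↑P \ {t} : Set Pt).Nonempty ∧ ¬ ConnectedIn (↑P \ {t})

/-- The grid graph induced on a set of grid points. -/
def gridGraph (Q : Set Pt) : SimpleGraph Q where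
  Adj a b := GridAdj a.val b.val
  symm := by
    constructor
    intro a b h
    unfold GridAdj at h ⊢
    rw [abs_sub_comm, abs_sub_comm (b.val.2)]
    exact h
  loopless := by
    constructor
    intro a h
    simp [GridAdj] at h

/-- A polyomino is tree-shaped if its grid graph is a tree. -/
def TreeShaped (P : Finset Pt) : Prop := (gridGraph (↑P : Set Pt)).IsTree

/-- A list of grid points is an ordering of a path-shaped polyomino:
consecutive entries are adjacent, and no other pairs are adjacent. -/
def IsPathOrdering (l : List Pt) : Prop :=
  l.Nodup ∧ l.Chain' GridAdj ∧
    ∀ (i j : ℕ) (hi : i < l.length) (hj : j < l.length), i + 1 < j →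
      ¬ GridAdj (l.get ⟨i, hi⟩) (l.get ⟨j, hj⟩)

/-- A finite set of tiles is a path-shaped polyomino. -/
def IsPathPoly (W : Finset Pt) : Prop := ∃ l : List Pt, l.toFinset = W ∧ IsPathOrdering l

/-- The grid points on the straight segment from `p` to `q` (inclusive),
for `p`, `q` on a common axis-parallel line. -/
def segList (p q : Pt) : List Pt :=
  (List.range ((|q.1 - p.1| + |q.2 - p.2|).toNat + 1)).map
    (fun k => (p.1 + (k : ℤ) * (q.1 - p.1).sign, p.2 + (k : ℤ) * (q.2 - p.2).sign))

/-- `l` is a simple path in the grid graph of `Q` from `a` to `b`. -/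
def IsPathIn (Q : Set Pt) (a b : Pt) (l : List Pt) : Prop :=
  l ≠ [] ∧ l.Nodup ∧ (∀ x ∈ l, x ∈ Q) ∧ l.Chain' GridAdj ∧
    l.head? = some a ∧ l.getLast? = some b

/-- `l` is a shortest path in the grid graph of `Q` from `a` to `b`. -/
def IsShortestPathIn (Q : Set Pt) (a b : Pt) (l : List Pt) : Prop :=
  IsPathIn Q a b l ∧ ∀ l' : List Pt, IsPathIn Q a b l' → l.length ≤ l'.length


lemma gridAdj_symm' {p q : Pt} (h : GridAdj p q) : GridAdj q p := by
  unfold GridAdj at h ⊢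
  rw [abs_sub_comm, abs_sub_comm q.2]
  exact h

lemma gridAdj_irrefl (p : Pt) : ¬ GridAdj p p := by simp [GridAdj]

lemma freeDir_mono {p : Pt} {Q Q' : Set Pt} (hsub : Q' ⊆ Q) (h : FreeDir p Q) : FreeDir p Q' := by
  unfold FreeDir Nblk Sblk Eblk Wblk at h ⊢
  have mk : ∀ (P2 : Pt → Prop), {q ∈ Q | P2 q} = ∅ → {q ∈ Q' | P2 q} = ∅ := by
    intro P2 hP
    ext x
    simp only [Set.mem_empty_iff_false, iff_false]
    intro hx
    have hmem : x ∈ ({q ∈ Q | P2 q} : Set Pt) := ⟨hsub hx.1, hx.2⟩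
    rw [hP] at hmem
    exact hmem
  rcases h with h|h|h|h
  · exact Or.inl (mk _ h)
  · exact Or.inr (Or.inl (mk _ h))
  · exact Or.inr (Or.inr (Or.inl (mk _ h)))
  · exact Or.inr (Or.inr (Or.inr (mk _ h)))

lemma memtake : ∀ (L : List Pt) (s : ℕ) (x : Pt),
    x ∈ L.take s ↔ ∃ t, ∃ ht : t < L.length, t < s ∧ L.get ⟨t, ht⟩ = x := by
  intro L s x
  rw [List.mem_take_iff_getElem]
  constructor
  · rintro ⟨i, hm, hx⟩
    exact ⟨i, (lt_min_iff.mp hm).2, (lt_min_iff.mp hm).1, hx⟩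
  · rintro ⟨t, ht, hts, hx⟩
    exact ⟨t, lt_min_iff.mpr ⟨hts, ht⟩, hx⟩

/-- A constructible path-shaped polyomino with `k` tiles contains a subpath of
at least `⌈k/2⌉` consecutive tiles that is sequentially constructible from one of its
endpoints. -/
theorem tap_half_path_sequentially_constructible
    (W : Finset Pt) (k : ℕ) (hk : W.card = k)
    (l : List Pt) (hlW : l.toFinset = W) (hpath : IsPathOrdering l)
    (hconstr : Constructible W) :
    ∃ i m : ℕ, i + m ≤ l.length ∧ (k + 1) / 2 ≤ m ∧
      (ConstructibleOrder ((l.drop i).take m) ∨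
        ConstructibleOrder ((l.drop i).take m).reverse) := by
  classical
  obtain ⟨hnd, hchain, hnonadj⟩ := hpath
  have hlen : l.length = k := by
    rw [← hk, ← hlW]; exact (List.toFinset_card_of_nodup hnd).symm
  rcases Nat.eq_zero_or_pos k with hk0 | hkpos
  · refine ⟨0, 0, by omega, by omega, Or.inl ?_⟩
    intro i h hi
    simp at h
  obtain ⟨l', hnd', hl'W, hco⟩ := hconstr
  have hlen' : l'.length = k := by
    rw [← hk, ← hl'W]; exact (List.toFinset_card_of_nodup hnd').symm
  have hmem : ∀ x : Pt, x ∈ l' ↔ x ∈ l := fun x => by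
    rw [← List.mem_toFinset, ← List.mem_toFinset, hl'W, hlW]
  have h0 : 0 < l'.length := by omega
  obtain ⟨⟨j, hj⟩, hj0⟩ := List.mem_iff_get.mp ((hmem _).mp (List.get_mem l' ⟨0, h0⟩))
  have hinj : ∀ (r t : ℕ) (hr : r < l.length) (ht : t < l.length),
      l.get ⟨r, hr⟩ = l.get ⟨t, ht⟩ → r = t := by
    intro r t hr ht h
    exact congrArg Fin.val ((List.Nodup.get_inj_iff hnd).mp h)
  have hnadj : ∀ (r t : ℕ) (hr : r < l.length) (ht : t < l.length),
      r ≠ t → r ≠ t + 1 → t ≠ r + 1 →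
      ¬ GridAdj (l.get ⟨r, hr⟩) (l.get ⟨t, ht⟩) := by
    intro r t hr ht h1 h2 h3
    rcases lt_or_gt_of_ne h1 with h | h
    · exact hnonadj r t hr ht (by omega)
    · intro hadj
      exact hnonadj t r ht hr (by omega) (gridAdj_symm' hadj)
  have hadjc : ∀ (r t : ℕ) (hr : r < l.length) (ht : t < l.length), t = r + 1 →
      GridAdj (l.get ⟨r, hr⟩) (l.get ⟨t, ht⟩) := by
    intro r t hr ht h
    subst h
    exact List.isChain_iff_getElem.mp hchain r (by omega)
  -- every construction prefix is an interval of the path containing j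
  have key : ∀ s : ℕ, 1 ≤ s → s ≤ k → ∃ a b : ℕ, a ≤ j ∧ j ≤ b ∧ b < l.length ∧ b + 1 = a + s ∧
      ∀ x : Pt, x ∈ l'.take s ↔ ∃ t, ∃ ht : t < l.length, a ≤ t ∧ t ≤ b ∧ l.get ⟨t, ht⟩ = x := by
    intro s
    induction s with
    | zero => intro h1 h2; omega
    | succ s ih =>
      intro h1 h2
      rcases Nat.eq_zero_or_pos s with hs0 | hs1
      · subst hs0
        refine ⟨j, j, le_refl _, le_refl _, hj, by omega, ?_⟩
        intro x
        rw [memtake]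
        constructor
        · rintro ⟨t, ht, ht1, hx⟩
          have ht0 : t = 0 := by omega
          subst ht0
          exact ⟨j, hj, le_refl _, le_refl _, hj0.trans hx⟩
        · rintro ⟨t, ht, h1', h2', hx⟩
          have htj : t = j := by omega
          subst htj
          exact ⟨0, h0, by omega, hj0.symm.trans hx⟩
      · obtain ⟨a, b, haj, hjb, hb, hab, hiff⟩ := ih hs1 (by omega)
        have hsl : s < l'.length := by omega
        obtain ⟨hpnot, ⟨q, hqmem, hpq⟩, hfree⟩ := hco s hsl hs1
        set p := l'.get ⟨s, hsl⟩ with hp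
        obtain ⟨⟨r, hrl⟩, hrp⟩ := List.mem_iff_get.mp ((hmem p).mp (List.get_mem l' ⟨s, hsl⟩))
        simp only [Set.mem_setOf_eq] at hqmem hpnot
        obtain ⟨t, htl, hat, htb, htq⟩ := (hiff q).mp hqmem
        have hrnot : ¬ (a ≤ r ∧ r ≤ b) := by
          rintro ⟨h1', h2'⟩
          exact hpnot ((hiff p).mpr ⟨r, hrl, h1', h2', hrp⟩)
        have hrt : r = t + 1 ∨ t = r + 1 := by
          by_contra hcon
          push_neg at hcon
          have hne : r ≠ t := by
            intro h
            apply gridAdj_irrefl p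
            have hqp : q = p := by
              rw [← hrp, ← htq]
              subst h
              rfl
            rw [hqp] at hpq
            exact hpq
          exact hnadj r t hrl htl hne hcon.1 hcon.2 (by rw [hrp, htq]; exact hpq)
        have htake1 : ∀ x : Pt, x ∈ l'.take (s+1) ↔ x ∈ l'.take s ∨ x = p := by
          intro x
          rw [memtake, memtake]
          constructor
          · rintro ⟨u, hu, hus, hx⟩
            rcases Nat.lt_or_ge u s with h | h
            · exact Or.inl ⟨u, hu, h, hx⟩
            · have hus' : u = s := by omega
              subst hus'
              exact Or.inr hx.symm
          · rintro (⟨u, hu, hus, hx⟩ | rfl)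
            · exact ⟨u, hu, by omega, hx⟩
            · exact ⟨s, hsl, by omega, rfl⟩
        rcases hrt with hrt | hrt
        · -- r = b + 1 : extend right
          have hrb : r = b + 1 := by omega
          refine ⟨a, b + 1, haj, by omega, by omega, by omega, ?_⟩
          intro x
          rw [htake1 x]
          constructor
          · rintro (hx | rfl)
            · obtain ⟨u, hu, h1', h2', hx⟩ := (hiff x).mp hx
              exact ⟨u, hu, h1', by omega, hx⟩
            · exact ⟨r, hrl, by omega, by omega, hrp⟩
          · rintro ⟨u, hu, h1', h2', hx⟩
            rcases Nat.lt_or_ge u (b + 1) with h | h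
            · exact Or.inl ((hiff x).mpr ⟨u, hu, h1', by omega, hx⟩)
            · have hur : u = r := by omega
              subst hur
              exact Or.inr (hx.symm.trans hrp)
        · -- r = a - 1 : extend left
          have hra : a = r + 1 := by omega
          refine ⟨r, b, by omega, hjb, hb, by omega, ?_⟩
          intro x
          rw [htake1 x]
          constructor
          · rintro (hx | rfl)
            · obtain ⟨u, hu, h1', h2', hx⟩ := (hiff x).mp hx
              exact ⟨u, hu, by omega, h2', hx⟩
            · exact ⟨r, hrl, le_refl _, by omega, hrp⟩
          · rintro ⟨u, hu, h1', h2', hx⟩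
            rcases Nat.lt_or_ge r u with h | h
            · exact Or.inl ((hiff x).mpr ⟨u, hu, by omega, h2', hx⟩)
            · have hur : u = r := by omega
              subst hur
              exact Or.inr (hx.symm.trans hrp)
  -- the tile at any position r ≠ j has a free direction w.r.t. the tiles between it and j
  have main : ∀ (r : ℕ) (hr : r < l.length), r ≠ j →
      FreeDir (l.get ⟨r, hr⟩)
        {x | ∃ t, ∃ ht : t < l.length, min j r ≤ t ∧ t ≤ max j r ∧ t ≠ r ∧ l.get ⟨t, ht⟩ = x} := by
    intro r hr hrj
    set p := l.get ⟨r, hr⟩ with hp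
    obtain ⟨⟨s, hsl⟩, hsp⟩ := List.mem_iff_get.mp ((hmem p).mpr (List.get_mem l ⟨r, hr⟩))
    have hs1 : 1 ≤ s := by
      by_contra hcon
      have hs0 : s = 0 := by omega
      subst hs0
      exact hrj (hinj r j hr hj (hp.symm.trans (hsp.symm.trans hj0.symm)))
    obtain ⟨a, b, haj, hjb, hbl, hab, hiff⟩ := key s hs1 (by omega)
    obtain ⟨a2, b2, haj2, hjb2, hbl2, hab2, hiff2⟩ := key (s + 1) (by omega) (by omega)
    have hsub : ∀ u, a ≤ u → u ≤ b → a2 ≤ u ∧ u ≤ b2 := by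
      intro u h1 h2
      have hub : u < l.length := by omega
      have hx : l.get ⟨u, hub⟩ ∈ l'.take s := (hiff _).mpr ⟨u, hub, h1, h2, rfl⟩
      rw [memtake] at hx
      obtain ⟨v, hv, hvs, hxv⟩ := hx
      have hx2 : l.get ⟨u, hub⟩ ∈ l'.take (s + 1) := (memtake _ _ _).mpr ⟨v, hv, by omega, hxv⟩
      obtain ⟨w, hw, h1', h2', hxw⟩ := (hiff2 _).mp hx2
      have hwu : w = u := hinj w u hw hub hxw
      omega
    have hsa := hsub a (le_refl a) (by omega)
    have hsb := hsub b (by omega) (le_refl b)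
    have hpin : p ∈ l'.take (s + 1) := (memtake _ _ _).mpr ⟨s, hsl, by omega, hsp⟩
    obtain ⟨u, hu, hu1, hu2, hup⟩ := (hiff2 p).mp hpin
    have hur : u = r := hinj u r hu hr (hup.trans hp)
    rw [hur] at hu1 hu2
    obtain ⟨hpnotin, -, hfree⟩ := hco s hsl hs1
    rw [hsp] at hpnotin hfree
    have hrab : ¬ (a ≤ r ∧ r ≤ b) := by
      rintro ⟨h1, h2⟩
      exact hpnotin ((hiff p).mpr ⟨r, hr, h1, h2, hp.symm⟩)
    have hrpos : r = b + 1 ∨ r + 1 = a := by omega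
    apply freeDir_mono _ hfree
    rintro x ⟨t, ht, h1, h2, h3, hx⟩
    exact (hiff x).mpr ⟨t, ht, by omega, by omega, hx⟩
  rcases le_or_gt ((k + 1) / 2) (k - j) with hcase | hcase
  · -- right segment, forward
    refine ⟨j, k - j, by omega, hcase, Or.inl ?_⟩
    have hseglen : ((l.drop j).take (k - j)).length = k - j := by
      rw [List.length_take, List.length_drop, hlen]
      exact min_self _
    intro s hslen hs1
    have hs : s < k - j := by rw [hseglen] at hslen; exact hslen
    have hjs : j + s < l.length := by omega
    have hget : ((l.drop j).take (k - j)).get ⟨s, hslen⟩ = l.get ⟨j + s, hjs⟩ := by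
      simp only [List.get_eq_getElem, List.getElem_take, List.getElem_drop]
    have hQ : ∀ x : Pt, x ∈ ((l.drop j).take (k - j)).take s ↔
        ∃ t, ∃ ht : t < l.length, j ≤ t ∧ t < j + s ∧ l.get ⟨t, ht⟩ = x := by
      intro x
      rw [memtake]
      constructor
      · rintro ⟨u, hu, hus, hxu⟩
        have hu' : u < k - j := by rw [hseglen] at hu; exact hu
        refine ⟨j + u, by omega, by omega, by omega, ?_⟩
        rw [← hxu]
        simp only [List.get_eq_getElem, List.getElem_take, List.getElem_drop]
      · rintro ⟨t, ht, h1, h2, hx⟩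
        refine ⟨t - j, by rw [hseglen]; omega, by omega, ?_⟩
        rw [← hx]
        simp only [List.get_eq_getElem, List.getElem_take, List.getElem_drop,
          show j + (t - j) = t from by omega]
    rw [hget]
    refine ⟨?_, ⟨l.get ⟨j + s - 1, by omega⟩, ?_, ?_⟩, ?_⟩
    · intro hmemQ
      simp only [Set.mem_setOf_eq] at hmemQ
      obtain ⟨t, ht, h1, h2, hx⟩ := (hQ _).mp hmemQ
      have := hinj t (j + s) ht hjs hx
      omega
    · exact (hQ _).mpr ⟨j + s - 1, by omega, by omega, by omega, rfl⟩
    · exact gridAdj_symm' (hadjc (j + s - 1) (j + s) (by omega) hjs (by omega))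
    · apply freeDir_mono _ (main (j + s) hjs (by omega))
      rintro x hx
      simp only [Set.mem_setOf_eq] at hx
      obtain ⟨t, ht, h1, h2, hxt⟩ := (hQ x).mp hx
      exact ⟨t, ht, by omega, by omega, by omega, hxt⟩
  · -- left segment, reversed
    refine ⟨0, j + 1, by omega, by omega, Or.inr ?_⟩
    rw [List.drop_zero]
    have hseglen : ((l.take (j + 1)).reverse).length = j + 1 := by
      rw [List.length_reverse, List.length_take]; omega
    intro s hslen hs1
    have hs : s ≤ j := by rw [hseglen] at hslen; omega
    have hjs : j - s < l.length := by omega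
    have hidx : ∀ u : ℕ, u ≤ j → ∀ hu : u < ((l.take (j + 1)).reverse).length,
        ((l.take (j + 1)).reverse).get ⟨u, hu⟩ = l.get ⟨j - u, by omega⟩ := by
      intro u huj hu
      simp only [List.get_eq_getElem, List.getElem_reverse, List.getElem_take, List.length_take]
      congr 1
      omega
    have hget := hidx s hs hslen
    have hQ : ∀ x : Pt, x ∈ ((l.take (j + 1)).reverse).take s ↔
        ∃ t, ∃ ht : t < l.length, j - s < t ∧ t ≤ j ∧ l.get ⟨t, ht⟩ = x := by
      intro x
      rw [memtake]
      constructor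
      · rintro ⟨u, hu, hus, hxu⟩
        have hu' : u ≤ j := by rw [hseglen] at hu; omega
        refine ⟨j - u, by omega, by omega, by omega, ?_⟩
        rw [← hxu, hidx u hu' hu]
      · rintro ⟨t, ht, h1, h2, hx⟩
        refine ⟨j - t, by rw [hseglen]; omega, by omega, ?_⟩
        rw [← hx, hidx (j - t) (by omega) (by rw [hseglen]; omega)]
        simp only [show j - (j - t) = t from by omega]
    rw [hget]
    refine ⟨?_, ⟨l.get ⟨j - s + 1, by omega⟩, ?_, ?_⟩, ?_⟩
    · intro hmemQ
      simp only [Set.mem_setOf_eq] at hmemQ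
      obtain ⟨t, ht, h1, h2, hx⟩ := (hQ _).mp hmemQ
      have := hinj t (j - s) ht hjs hx
      omega
    · exact (hQ _).mpr ⟨j - s + 1, by omega, by omega, by omega, rfl⟩
    · exact hadjc (j - s) (j - s + 1) hjs (by omega) rfl
    · apply freeDir_mono _ (main (j - s) hjs (by omega))
      rintro x hx
      simp only [Set.mem_setOf_eq] at hx
      obtain ⟨t, ht, h1, h2, hxt⟩ := (hQ x).mp hx
      exact ⟨t, ht, by omega, by omega, by omega, hxt⟩
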